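/- arXiv:2602.21347 — 4 statements merged into one kernel-verified Lean document; each statement's English description precedes it below -/
import Mathlib

section
/- Let 0 < R₋ < R₊, R = (R₊ + R₋)/2, d = (R₊ - R₋)/2, C = (0, R), C₊ = (0, R₊). Suppose a collision with the focusing boundary occurs at the point P = (R₊ sin(s/R₊), R₊(1 - cos(s/R₊))) at arc length s ∈ (0, πR₊/2] from the origin, with unit outward normal n = (sin(s/R₊), -cos(s/R₊)), pre-collision velocity v ∈ ℝ² satisfying ⟨v, n⟩ > 0, and post-collision velocity v₊ = v - 2⟨v, n⟩ n. Then, writing L₋ = (P - C) × v and L₊ = (P - C) × v₊ for the angular momenta about C before and after the collision, one has L₊ - L₋ = 2 ⟨v, n⟩ d sin(s/R₊) ≥ (4d/(πR₊)) · s · ⟨v, n⟩ > 0. -/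
open scoped InnerProductSpace

/-- Planar cross product of two vectors in ℝ². -/
noncomputable def cross (x y : EuclideanSpace ℝ (Fin 2)) : ℝ :=
  x 0 * y 1 - x 1 * y 0

/-- A point of ℝ² with given coordinates. -/
noncomputable def pt (x y : ℝ) : EuclideanSpace ℝ (Fin 2) :=
  (WithLp.equiv 2 (Fin 2 → ℝ)).symm ![x, y]

@[simp] lemma pt_apply0 (x y : ℝ) : pt x y 0 = x := rfl
@[simp] lemma pt_apply1 (x y : ℝ) : pt x y 1 = y := rfl

/-- At a collision with the focusing boundary at arc length `s ∈ (0, πR₊/2]`,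
the angular momentum about the center `C` of the middle circle jumps by
`2⟨v,n⟩ d sin(s/R₊) ≥ (4d/(πR₊)) s ⟨v,n⟩ > 0`. -/
theorem focusing_collision_repels (Rm Rp R d : ℝ) (hRm : 0 < Rm) (hRmRp : Rm < Rp)
    (hR : R = (Rp + Rm) / 2) (hd : d = (Rp - Rm) / 2)
    (C Cp : EuclideanSpace ℝ (Fin 2)) (hC : C = pt 0 R) (hCp : Cp = pt 0 Rp)
    (s : ℝ) (hs : 0 < s) (hs' : s ≤ Real.pi * Rp / 2)
    (P n : EuclideanSpace ℝ (Fin 2))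
    (hP : P = pt (Rp * Real.sin (s / Rp)) (Rp * (1 - Real.cos (s / Rp))))
    (hn : n = pt (Real.sin (s / Rp)) (-Real.cos (s / Rp)))
    (v : EuclideanSpace ℝ (Fin 2)) (hv : 0 < ⟪v, n⟫_ℝ)
    (vp : EuclideanSpace ℝ (Fin 2)) (hvp : vp = v - (2 * ⟪v, n⟫_ℝ) • n)
    (Lm Lp : ℝ) (hLm : Lm = cross (P - C) v) (hLp : Lp = cross (P - C) vp) :
    Lp - Lm = 2 * ⟪v, n⟫_ℝ * d * Real.sin (s / Rp) ∧
    2 * ⟪v, n⟫_ℝ * d * Real.sin (s / Rp) ≥ (4 * d / (Real.pi * Rp)) * s * ⟪v, n⟫_ℝ ∧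
    0 < (4 * d / (Real.pi * Rp)) * s * ⟪v, n⟫_ℝ := by
  have hRp : 0 < Rp := hRm.trans hRmRp
  have hdpos : 0 < d := by rw [hd]; linarith
  set c := ⟪v, n⟫_ℝ with hc
  set θ := s / Rp with hθ
  have hθ0 : 0 < θ := div_pos hs hRp
  have hθ2 : θ ≤ Real.pi / 2 := by
    rw [hθ, div_le_div_iff₀ hRp (by norm_num : (0:ℝ) < 2)]
    linarith [hs']
  -- jump formula
  have hjump : Lp - Lm = 2 * c * d * Real.sin θ := by
    subst hLp hLm hvp hP hn hC
    simp only [cross, PiLp.sub_apply, PiLp.smul_apply, pt_apply0, pt_apply1, smul_eq_mul]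
    rw [hR, hd]
    ring
  refine ⟨hjump, ?_, ?_⟩
  · have hsin : 2 / Real.pi * θ ≤ Real.sin θ := Real.mul_le_sin hθ0.le hθ2
    have hπ : 0 < Real.pi := Real.pi_pos
    have key : (4 * d / (Real.pi * Rp)) * s = 2 * d * (2 / Real.pi * θ) := by
      field_simp [hθ]
      rw [hθ]; field_simp; norm_num
    have : (4 * d / (Real.pi * Rp)) * s ≤ 2 * d * Real.sin θ := by
      rw [key]
      exact mul_le_mul_of_nonneg_left hsin (by positivity)
    calc (4 * d / (Real.pi * Rp)) * s * c ≤ 2 * d * Real.sin θ * c :=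
          mul_le_mul_of_nonneg_right this hv.le
      _ = 2 * c * d * Real.sin θ := by ring
  · have hπ : 0 < Real.pi := Real.pi_pos
    positivity
end

section
/- Let 0 < R₋ < R₊, R = (R₊ + R₋)/2, d = (R₊ - R₋)/2, C = (0, R), C₋ = (0, R₋). Suppose a collision with the dispersing boundary occurs at the point P = (R₋ sin(s/R₋), R₋(1 - cos(s/R₋))) at arc length s ∈ (0, πR₋/2] from the origin, with unit outward normal n = (-sin(s/R₋), cos(s/R₋)), pre-collision velocity v ∈ ℝ² satisfying ⟨v, n⟩ > 0, and post-collision velocity v₊ = v - 2⟨v, n⟩ n. Then, writing L₋ = (P - C) × v and L₊ = (P - C) × v₊, one has L₊ - L₋ = 2 ⟨v, n⟩ d sin(s/R₋) ≥ (4d/(πR₋)) · s · ⟨v, n⟩ > 0. -/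
open scoped InnerProductSpace

/-- At a collision with the dispersing boundary at arc length `s ∈ (0, πR₋/2]`,
the angular momentum about the center `C` of the middle circle jumps by
`2⟨v,n⟩ d sin(s/R₋) ≥ (4d/(πR₋)) s ⟨v,n⟩ > 0`. -/
theorem dispersing_collision_repels (Rm Rp R d : ℝ) (hRm : 0 < Rm) (hRmRp : Rm < Rp)
    (hR : R = (Rp + Rm) / 2) (hd : d = (Rp - Rm) / 2)
    (C Cm : EuclideanSpace ℝ (Fin 2)) (hC : C = pt 0 R) (hCm : Cm = pt 0 Rm)
    (s : ℝ) (hs : 0 < s) (hs' : s ≤ Real.pi * Rm / 2)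
    (P n : EuclideanSpace ℝ (Fin 2))
    (hP : P = pt (Rm * Real.sin (s / Rm)) (Rm * (1 - Real.cos (s / Rm))))
    (hn : n = pt (-Real.sin (s / Rm)) (Real.cos (s / Rm)))
    (v : EuclideanSpace ℝ (Fin 2)) (hv : 0 < ⟪v, n⟫_ℝ)
    (vp : EuclideanSpace ℝ (Fin 2)) (hvp : vp = v - (2 * ⟪v, n⟫_ℝ) • n)
    (Lm Lp : ℝ) (hLm : Lm = cross (P - C) v) (hLp : Lp = cross (P - C) vp) :
    Lp - Lm = 2 * ⟪v, n⟫_ℝ * d * Real.sin (s / Rm) ∧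
    2 * ⟪v, n⟫_ℝ * d * Real.sin (s / Rm) ≥ (4 * d / (Real.pi * Rm)) * s * ⟪v, n⟫_ℝ ∧
    0 < (4 * d / (Real.pi * Rm)) * s * ⟪v, n⟫_ℝ := by

  have hθ0 : 0 < s / Rm := div_pos hs hRm
  have hθπ : s / Rm ≤ Real.pi / 2 := by
    rw [div_le_div_iff₀ hRm (by norm_num : (0:ℝ) < 2)] at *
    nlinarith [hs']
  set a := ⟪v, n⟫_ℝ with ha
  set θ := s / Rm with hθ
  have hd0 : 0 < d := by rw [hd]; linarith
  have hπ : 0 < Real.pi := Real.pi_pos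
  have hsin : 2 / Real.pi * θ ≤ Real.sin θ := Real.mul_le_sin hθ0.le hθπ
  have hjump : Lp - Lm = 2 * a * d * Real.sin θ := by
    subst hLp hLm hvp hP hC hn
    simp only [cross, pt, PiLp.sub_apply, PiLp.smul_apply, smul_eq_mul,
      WithLp.equiv_symm_apply, PiLp.toLp_apply, Matrix.cons_val_zero, Matrix.cons_val_one,
      Matrix.head_cons]
    have : R = Rm + d := by rw [hR, hd]; ring
    rw [this]
    ring
  refine ⟨hjump, ?_, ?_⟩
  · have h1 : (4 * d / (Real.pi * Rm)) * s * a = 2 * a * d * (2 / Real.pi * θ) := by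
      field_simp [hθ]
      rw [hθ]; field_simp; norm_num
    rw [h1]
    exact mul_le_mul_of_nonneg_left hsin (by positivity)
  · apply mul_pos (mul_pos _ hs) hv
    positivity
end

section
/- Let c₁ > 0 and a > 0. There do not exist sequences (θₙ) of positive reals and (Lₙ) of reals bounded above such that for all n: θ_{n+1} < θₙ, θₙ - θ_{n+1} ≤ c₁ θₙ θ_{n+1}, and L_{n+1} - Lₙ ≥ a·θₙ. -/
/-- There is no positive strictly decreasing sequence `(θₙ)` with
`θₙ - θ_{n+1} ≤ c₁ θₙ θ_{n+1}` together with a sequence `(Lₙ)` bounded above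
satisfying `L_{n+1} - Lₙ ≥ a θₙ`. -/
theorem no_accumulation_at_tip (c₁ a : ℝ) (hc₁ : 0 < c₁) (ha : 0 < a) :
    ¬ ∃ (θ L : ℕ → ℝ), (∀ n, 0 < θ n) ∧ (∃ M : ℝ, ∀ n, L n ≤ M) ∧
      (∀ n, θ (n + 1) < θ n) ∧
      (∀ n, θ n - θ (n + 1) ≤ c₁ * θ n * θ (n + 1)) ∧
      (∀ n, L (n + 1) - L n ≥ a * θ n) := by
  rintro ⟨θ, L, hθpos, ⟨M, hM⟩, hdec, hineq, hL⟩
  -- 1/θ grows at most linearly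
  have hstep : ∀ n, 1 / θ (n + 1) ≤ 1 / θ n + c₁ := by
    intro n
    have h1 := hθpos n
    have h2 := hθpos (n + 1)
    have h3 := hineq n
    rw [div_add' _ _ _ (ne_of_gt h1), div_le_div_iff₀ h2 h1]
    nlinarith
  have hlin : ∀ n, 1 / θ n ≤ 1 / θ 0 + c₁ * n := by
    intro n
    induction n with
    | zero => simp
    | succ k ih =>
      have := hstep k
      push_cast
      nlinarith
  -- lower bound on θ n
  set C : ℝ := max (1 / θ 0) c₁ with hC
  have hCpos : 0 < C := lt_max_of_lt_right hc₁
  have hθlb : ∀ n : ℕ, (1 / C) * (1 / ((n : ℝ) + 1)) ≤ θ n := by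
    intro n
    have hn1 : (0 : ℝ) < (n : ℝ) + 1 := by positivity
    have h2 : 1 / θ n ≤ C * ((n : ℝ) + 1) := by
      refine (hlin n).trans ?_
      have hb : 1 / θ 0 ≤ C := le_max_left _ _
      have hc : c₁ ≤ C := le_max_right _ _
      have hn : (0 : ℝ) ≤ (n : ℝ) := Nat.cast_nonneg n
      nlinarith
    have hpos := hθpos n
    have e1 : θ n * (1 / θ n) = 1 := mul_one_div_cancel (ne_of_gt hpos)
    have e2 : C * (1 / C) = 1 := mul_one_div_cancel (ne_of_gt hCpos)
    have e3 : ((n : ℝ) + 1) * (1 / ((n : ℝ) + 1)) = 1 := mul_one_div_cancel (ne_of_gt hn1)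
    nlinarith [mul_pos hCpos hn1, mul_pos (show (0:ℝ) < 1/C by positivity)
      (show (0:ℝ) < 1/((n:ℝ)+1) by positivity)]
  -- L grows like the harmonic series
  have hLgrow : ∀ n : ℕ, L 0 + (a / C) * ∑ k ∈ Finset.range n, (1 / ((k : ℝ) + 1)) ≤ L n := by
    intro n
    induction n with
    | zero => simp
    | succ m ih =>
      rw [Finset.sum_range_succ]
      have h1 := hL m
      have h2 := hθlb m
      have : a * ((1 / C) * (1 / ((m : ℝ) + 1))) ≤ a * θ m :=
        mul_le_mul_of_nonneg_left h2 ha.le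
      have e : a / C * (1 / ((m : ℝ) + 1)) = a * (1 / C * (1 / ((m : ℝ) + 1))) := by ring
      rw [mul_add]
      linarith
  -- harmonic series diverges
  have hdiv := Real.tendsto_sum_range_one_div_nat_succ_atTop
  have haC : 0 < a / C := by positivity
  obtain ⟨n, hn⟩ := (Filter.tendsto_atTop.mp hdiv ((M - L 0) / (a / C) + 1)).exists
  have hsum : (M - L 0) / (a / C) + 1 ≤ ∑ i ∈ Finset.range n, (1 / ((i : ℝ) + 1)) := hn
  have h1 := hLgrow n
  have h2 := hM n
  have h3 : (a / C) * ((M - L 0) / (a / C) + 1) ≤ (a / C) * ∑ i ∈ Finset.range n, (1 / ((i : ℝ) + 1)) :=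
    mul_le_mul_of_nonneg_left hsum haC.le
  have h4 : (a / C) * ((M - L 0) / (a / C)) = M - L 0 := by field_simp
  nlinarith
end

section
/- Let I ⊆ ℝ be an open interval and let s : ℝ → ℝ be twice differentiable on I with s(t) > 0 and |s'(t)| < 1 for all t ∈ I. If s satisfies the differential equation s''(t) = 2(1 - s'(t)²)/s(t) on I, then the function t ↦ s(t)² √(1 - s'(t)²) is constant on I. -/
/-- Along any solution of the ODE `s'' = 2(1 - (s')²)/s` on an open interval
(an open order-connected subset of ℝ) with `s > 0` and `|s'| < 1`, the quantity
`s² √(1 - (s')²)` is constant. -/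
theorem adiabatic_invariant_conserved (I : Set ℝ) (hIopen : IsOpen I)
    (hIint : I.OrdConnected) (s : ℝ → ℝ)
    (hdiff : ∀ t ∈ I, DifferentiableAt ℝ s t)
    (hdiff' : ∀ t ∈ I, DifferentiableAt ℝ (deriv s) t)
    (hpos : ∀ t ∈ I, 0 < s t)
    (hspeed : ∀ t ∈ I, |deriv s t| < 1)
    (hode : ∀ t ∈ I, deriv (deriv s) t = 2 * (1 - (deriv s t) ^ 2) / s t) :
    ∀ t₁ ∈ I, ∀ t₂ ∈ I,
      s t₁ ^ 2 * Real.sqrt (1 - (deriv s t₁) ^ 2)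
        = s t₂ ^ 2 * Real.sqrt (1 - (deriv s t₂) ^ 2) := by
  set F : ℝ → ℝ := fun t => s t ^ 2 * Real.sqrt (1 - (deriv s t) ^ 2) with hF
  have key : ∀ t ∈ I, HasDerivAt F 0 t := by
    intro t ht
    have hg : 0 < 1 - (deriv s t) ^ 2 := by
      have := hspeed t ht
      nlinarith [abs_lt.mp this]
    have hsne : s t ≠ 0 := (hpos t ht).ne'
    have h1 : HasDerivAt s (deriv s t) t := (hdiff t ht).hasDerivAt
    have h2 : HasDerivAt (deriv s) (2 * (1 - (deriv s t) ^ 2) / s t) t := by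
      rw [← hode t ht]; exact (hdiff' t ht).hasDerivAt
    have hgder : HasDerivAt (fun τ => 1 - (deriv s τ) ^ 2)
        (-(2 * deriv s t * (2 * (1 - (deriv s t) ^ 2) / s t))) t := by
      have := ((h2.fun_pow 2)).const_sub 1
      refine this.congr_deriv ?_
      ring
    have hsqrt : HasDerivAt (fun τ => Real.sqrt (1 - (deriv s τ) ^ 2))
        (1 / (2 * Real.sqrt (1 - (deriv s t) ^ 2)) *
          (-(2 * deriv s t * (2 * (1 - (deriv s t) ^ 2) / s t)))) t :=
      (Real.hasDerivAt_sqrt hg.ne').comp t hgder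
    have hsq : HasDerivAt (fun τ => s τ ^ 2) (2 * s t * deriv s t) t := by
      have := h1.fun_pow 2
      refine this.congr_deriv ?_; ring
    have hprod := hsq.fun_mul hsqrt
    refine hprod.congr_deriv (Eq.symm ?_)
    have hsqrtpos : 0 < Real.sqrt (1 - (deriv s t) ^ 2) := Real.sqrt_pos.mpr hg
    have hsq' : Real.sqrt (1 - (deriv s t) ^ 2) * Real.sqrt (1 - (deriv s t) ^ 2)
        = 1 - (deriv s t) ^ 2 := Real.mul_self_sqrt hg.le
    field_simp
    linear_combination (-(2 * s t * deriv s t)) * hsq'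
  intro t₁ ht₁ t₂ ht₂
  have hconv : Convex ℝ I := hIint.convex
  have := hconv.is_const_of_fderivWithin_eq_zero (𝕜 := ℝ) (f := F)
    (fun t ht => ((key t ht).differentiableAt).differentiableWithinAt)
    (fun t ht => by
      rw [fderivWithin_of_isOpen hIopen ht]
      exact (key t ht).hasFDerivAt.fderiv.trans (ContinuousLinearMap.ext fun x => by simp)) ht₁ ht₂
  simpa [hF] using this
end
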